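/- arXiv:math/0607139 — 2 statements merged into one kernel-verified Lean document; each statement's English description precedes it below -/
import Mathlib

section
/- Let 𝒜 be an abelian category, ℋ a hereditary abelian category, and F : D^b(𝒜) → D^b(ℋ) a triangulated equivalence; for each indecomposable Q of 𝒜 write F(Q[0]) ≅ f(Q)[n(Q)]. Then the map f from isomorphism classes of indecomposables of 𝒜 to isomorphism classes of indecomposables of ℋ is one-to-one: if Q, Q' are indecomposables of 𝒜 with f(Q) ≅ f(Q') in ℋ, then Q ≅ Q' in 𝒜. -/
/-!
Statement 4: the map `f` induced on indecomposables by a triangulated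
equivalence `F : D^b(𝒜) → D^b(ℋ)` (with ℋ hereditary), determined by
`F(Q[0]) ≅ f(Q)[n(Q)]`, is one-to-one on isomorphism classes.
-/

open CategoryTheory CategoryTheory.Limits

universe w w' v u v' u'

namespace PiecewiseHereditaryPaper

variable (𝒜 : Type u) [Category.{v} 𝒜] [Abelian 𝒜] [HasDerivedCategory.{w} 𝒜]

/-- `Ext^d(X,Y) ≠ 0`, where `Ext^d` is computed as `Hom_{D(𝒜)}(X[0], Y[0][d])`. -/
def extNonzero (X Y : 𝒜) (d : ℤ) : Prop :=
  ∃ g : (DerivedCategory.singleFunctor 𝒜 0).obj X ⟶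
      (((DerivedCategory.singleFunctor 𝒜 0).obj Y)⟦d⟧), g ≠ 0

/-- An abelian category is hereditary if `Ext^d` vanishes for all `d ≥ 2`. -/
def Hereditary : Prop := ∀ (X Y : 𝒜) (d : ℕ), 2 ≤ d → ¬ extNonzero 𝒜 X Y (d : ℤ)

/-- The homology of the single complex `X[0]`, viewed in the derived category,
is identified with the homology of the single cochain complex. -/
noncomputable def homologySingle (X : 𝒜) (k : ℤ) :
    (DerivedCategory.homologyFunctor 𝒜 k).obj ((DerivedCategory.singleFunctor 𝒜 0).obj X)
      ≅ ((HomologicalComplex.single 𝒜 (ComplexShape.up ℤ) 0).obj X).homology k :=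
  (DerivedCategory.homologyFunctor 𝒜 k).mapIso
    (((SingleFunctors.evaluation _ _ (0 : ℤ)).mapIso
      (DerivedCategory.singleFunctorsPostcompQIso 𝒜)).app X) ≪≫
  (DerivedCategory.homologyFunctorFactors 𝒜 k).app _

/-- `H^0(X[0]) ≅ X`. -/
noncomputable def homologySingleZero (X : 𝒜) :
    (DerivedCategory.homologyFunctor 𝒜 0).obj ((DerivedCategory.singleFunctor 𝒜 0).obj X) ≅ X :=
  homologySingle 𝒜 X 0 ≪≫ HomologicalComplex.singleObjHomologySelfIso _ _ _

/-- `H^k(X[0]) = 0` for `k ≠ 0`. -/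
lemma isZero_homologySingle (X : 𝒜) (k : ℤ) (hk : k ≠ 0) :
    IsZero ((DerivedCategory.homologyFunctor 𝒜 k).obj
      ((DerivedCategory.singleFunctor 𝒜 0).obj X)) :=
  IsZero.of_iso (HomologicalComplex.isZero_single_obj_homology _ _ _ _ hk)
    (homologySingle 𝒜 X k)

/-- `H^0(Y⟦k⟧) ≅ H^k(Y)`. -/
noncomputable def homologyShift (Y : DerivedCategory 𝒜) (k : ℤ) :
    (DerivedCategory.homologyFunctor 𝒜 0).obj (Y⟦k⟧) ≅
      (DerivedCategory.homologyFunctor 𝒜 k).obj Y :=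
  ((DerivedCategory.homologyFunctor 𝒜 0).isoShift k).app Y

variable (ℋ : Type u') [Category.{v'} ℋ] [Abelian ℋ] [HasDerivedCategory.{w'} ℋ]

theorem f_one_to_one
    (hH : Hereditary ℋ)
    (F : DerivedCategory 𝒜 ⥤ DerivedCategory ℋ)
    [F.IsEquivalence] [F.CommShift ℤ] [F.IsTriangulated]
    (f : 𝒜 → ℋ) (n : 𝒜 → ℤ)
    (hfn : ∀ Q : 𝒜, Indecomposable Q → Indecomposable (f Q) ∧
      Nonempty (F.obj ((DerivedCategory.singleFunctor 𝒜 0).obj Q) ≅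
        (((DerivedCategory.singleFunctor ℋ 0).obj (f Q))⟦n Q⟧)))
    (Q Q' : 𝒜) (hQ : Indecomposable Q) (hQ' : Indecomposable Q')
    (h : Nonempty (f Q ≅ f Q')) :
    Nonempty (Q ≅ Q') := by
  obtain ⟨-, ⟨e1⟩⟩ := hfn Q hQ
  obtain ⟨-, ⟨e2⟩⟩ := hfn Q' hQ'
  obtain ⟨i⟩ := h
  set k : ℤ := n Q - n Q' with hk
  have hadd : n Q' + k = n Q := by omega
  -- an isomorphism `F(Q[0]) ≅ F(Q'[0]⟦k⟧)` in `D(ℋ)`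
  let e3 : F.obj ((DerivedCategory.singleFunctor 𝒜 0).obj Q) ≅
      F.obj (((DerivedCategory.singleFunctor 𝒜 0).obj Q')⟦k⟧) :=
    e1 ≪≫ (shiftFunctorAdd' (DerivedCategory ℋ) (n Q') k (n Q) hadd).app _ ≪≫
      (shiftFunctor (DerivedCategory ℋ) k).mapIso
        ((shiftFunctor (DerivedCategory ℋ) (n Q')).mapIso
          ((DerivedCategory.singleFunctor ℋ 0).mapIso i)) ≪≫
      (shiftFunctor (DerivedCategory ℋ) k).mapIso e2.symm ≪≫
      ((F.commShiftIso k).app ((DerivedCategory.singleFunctor 𝒜 0).obj Q')).symm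
  -- hence `Q[0] ≅ Q'[0]⟦k⟧` in `D(𝒜)` since `F` is an equivalence
  let E : (DerivedCategory.singleFunctor 𝒜 0).obj Q ≅
      ((DerivedCategory.singleFunctor 𝒜 0).obj Q')⟦k⟧ := F.preimageIso e3
  -- apply the homology functor in degree 0
  let E0 := (DerivedCategory.homologyFunctor 𝒜 0).mapIso E ≪≫
    homologyShift 𝒜 ((DerivedCategory.singleFunctor 𝒜 0).obj Q') k
  by_cases hk0 : k = 0
  · exact ⟨(homologySingleZero 𝒜 Q).symm ≪≫ E0 ≪≫
      eqToIso (by rw [hk0]) ≪≫ homologySingleZero 𝒜 Q'⟩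
  · exact absurd (IsZero.of_iso (isZero_homologySingle 𝒜 Q' k hk0)
      ((homologySingleZero 𝒜 Q).symm ≪≫ E0)) hQ.1

end PiecewiseHereditaryPaper
end

section
/- Let 𝒜 be a finite length abelian category, ℋ a hereditary abelian category, and F : D^b(𝒜) → D^b(ℋ) a triangulated equivalence; for each indecomposable P of 𝒜 write F(P[0]) ≅ f(P)[n(P)]. Assume there exist integers n₀ and d such that n₀ ≤ n(P) < n₀ + d for every indecomposable P of 𝒜. Then for every indecomposable Q of 𝒜, projd_𝒜 Q ≤ n(Q) − n₀ + 1 and injd_𝒜 Q ≤ n₀ + d − n(Q). In particular, gldim 𝒜 ≤ d. -/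
/-!
Under `F`, a nonzero class in `Ext^k_𝒜(X, Y)` between indecomposables becomes a nonzero morphism
`f(X)[n(X)] ⟶ f(Y)[n(Y) + k]`, i.e. a nonzero class in `Ext^(n(Y) + k - n(X))_ℋ(f(X), f(Y))`;
since `ℋ` is hereditary, `k ≤ n(X) - n(Y) + 1`.

Finite length lets us test `Ext` against simple objects only. For a fixed `Z` in `D(𝒜)`, the
objects `X` with `Hom(X[0], Z) = 0` contain `0` and are closed under extensions, because a short
exact sequence gives a distinguished triangle; running up a composition series, if they contain
every simple object they contain everything. The same holds for the objects `Y` with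
`Hom(Z, Y[0][k]) = 0`. Simple objects are indecomposable, so the bounds `n₀ ≤ n(S) < n₀ + d`
for simple `S` yield the three estimates.
-/

open CategoryTheory CategoryTheory.Limits

universe w w' v u v' u'

namespace PiecewiseHereditaryPaper

variable (𝒜 : Type u) [Category.{v} 𝒜] [Abelian 𝒜] [HasDerivedCategory.{w} 𝒜]

variable (ℋ : Type u') [Category.{v'} ℋ] [Abelian ℋ] [HasDerivedCategory.{w'} ℋ]

/-- The projective dimension `projd_𝒜 Q = sup {d : Ext^d_𝒜(Q,Q') ≠ 0 for some Q'}`,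
as an element of `ℕ∞` (the empty sup being `0`). -/
noncomputable def projDim (Q : 𝒜) : ℕ∞ :=
  ⨆ (d : ℕ) (_ : ∃ Q' : 𝒜, extNonzero 𝒜 Q Q' d), (d : ℕ∞)

/-- The injective dimension `injd_𝒜 Q = sup {d : Ext^d_𝒜(Q',Q) ≠ 0 for some Q'}`. -/
noncomputable def injDim (Q : 𝒜) : ℕ∞ :=
  ⨆ (d : ℕ) (_ : ∃ Q' : 𝒜, extNonzero 𝒜 Q' Q d), (d : ℕ∞)

/-- The global dimension `gldim 𝒜 = sup_Q projd_𝒜 Q`. -/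
noncomputable def gldim : ℕ∞ := ⨆ Q : 𝒜, projDim 𝒜 Q

/-- An abelian category has finite length if every object has a (finite)
composition series, i.e. a finite maximal chain of subobjects from `⊥` to `⊤`. -/
def FiniteLength : Prop :=
  ∀ X : 𝒜, ∃ (m : ℕ) (f : Fin (m + 1) → Subobject X),
    f 0 = ⊥ ∧ f (Fin.last m) = ⊤ ∧ ∀ i : Fin m, f i.castSucc ⋖ f i.succ

section FiniteLength

variable {C : Type*} [Category C] [Abelian C]

lemma simple_cokernel_arrow_of_isCoatom {Y : C} {A : Subobject Y} (hA : IsCoatom A) :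
    Simple (cokernel A.arrow) := by
  refine simple_of_cosimple _ fun {Z} q _ => ⟨fun _ hq => hA.1 ?_, fun hq => ?_⟩
  · have hπ : cokernel.π A.arrow = 0 := by
      rw [← cancel_mono q, hq, comp_zero, zero_comp]
    have := Preadditive.epi_of_cokernel_zero hπ
    exact (Subobject.isIso_arrow_iff_eq_top A).1 (isIso_of_mono_of_epi _)
  · set p := cokernel.π A.arrow ≫ q
    have hp : p ≠ 0 := fun h => hq (by rwa [← cancel_epi (cokernel.π A.arrow), comp_zero])
    have hle : A ≤ kernelSubobject p := le_kernelSubobject _ _ (by simp [p])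
    have hker : kernelSubobject p = A := by
      refine (eq_of_le_of_not_lt hle fun hlt => hp ?_).symm
      have := (Subobject.isIso_arrow_iff_eq_top _).2 (hA.2 _ hlt)
      simpa using (cancel_epi (kernelSubobject p).arrow).1
        ((kernelSubobject_arrow_comp p).trans (comp_zero).symm)
    have hι : kernel.ι p ≫ cokernel.π A.arrow = 0 := by
      rw [← kernelSubobject_arrow', ← Subobject.ofLE_arrow hker.le]
      simp only [Category.assoc, cokernel.condition, comp_zero]
    have hr := Abelian.comp_epiDesc p _ hι
    refine ⟨Abelian.epiDesc p _ hι, ?_, ?_⟩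
    · rw [← cancel_epi (cokernel.π A.arrow), ← Category.assoc, hr, Category.comp_id]
    · rw [← cancel_epi p, ← Category.assoc, hr, Category.comp_id]

variable (P : ObjectProperty C) [P.IsClosedUnderIsomorphisms] [P.IsClosedUnderExtensions]

lemma prop_of_covBy (hP : ∀ S : C, Simple S → P S) {X : C} {A B : Subobject X} (h : A ⋖ B)
    (hA : P (A : C)) : P (B : C) := by
  let A' : Subobject (B : C) := (Subobject.subobjectOrderIso B).symm ⟨A, h.le⟩
  have hA' : IsCoatom A' := by
    rw [← OrderIso.isCoatom_iff (Subobject.subobjectOrderIso B), OrderIso.apply_symm_apply,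
      Set.Iic.isCoatom_iff]
    exact h
  have hS : (ShortComplex.mk A'.arrow (cokernel.π _) (cokernel.condition _)).ShortExact :=
    .mk' (ShortComplex.exact_of_g_is_cokernel _ (cokernelIsCokernel _)) inferInstance inferInstance
  exact P.prop_X₂_of_shortExact hS
    (P.prop_of_iso (Subobject.underlyingIso (Subobject.ofLE A B h.le)).symm hA)
    (hP _ (simple_cokernel_arrow_of_isCoatom hA'))

theorem FiniteLength.prop_of_simple [P.ContainsZero] (hfl : FiniteLength C)
    (hP : ∀ S : C, Simple S → P S) (X : C) : P X := by
  obtain ⟨m, f, h0, hlast, hcov⟩ := hfl X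
  have hf : ∀ i, P (f i : C) := by
    intro i
    induction i using Fin.induction with
    | zero => exact h0 ▸ P.prop_of_isZero (IsZero.of_iso (isZero_zero C) Subobject.botCoeIsoZero)
    | succ i ih => exact prop_of_covBy P hP (hcov i) ih
  exact P.prop_of_iso (asIso (⊤ : Subobject X).arrow) (hlast ▸ hf (Fin.last m))

end FiniteLength

lemma nontrivial_hom_shift_sub {D : Type*} [Category D] [HasShift D ℤ] {A B : D} {a b : ℤ}
    [Nontrivial (A⟦a⟧ ⟶ B⟦b⟧)] : Nontrivial (A ⟶ B⟦b - a⟧) :=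
  ((Functor.FullyFaithful.ofFullyFaithful (shiftFunctor D a)).homEquiv.trans
    (Iso.homCongr (Iso.refl _)
      ((shiftFunctorAdd' D (b - a) a b (by omega)).app B).symm)).nontrivial

section Pretriangulated

open Pretriangulated ZeroObject

variable {D : Type*} [Category D] [HasZeroObject D] [HasShift D ℤ] [Preadditive D]
  [∀ n : ℤ, (shiftFunctor D n).Additive] [Pretriangulated D]
  (P : ObjectProperty D) [P.IsClosedUnderIsomorphisms]

instance [P.IsTriangulatedClosed₂] (a : ℤ) : (P.shift a).IsTriangulatedClosed₂ :=
  .mk' fun T hT h₁ h₃ =>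
    P.ext_of_isTriangulatedClosed₂ _ (Triangle.shift_distinguished T hT a) h₁ h₃

instance [P.ContainsZero] (a : ℤ) : (P.shift a).ContainsZero where
  exists_zero :=
    ⟨0, isZero_zero D, P.prop_of_isZero ((shiftFunctor D a).map_isZero (isZero_zero D))⟩

end Pretriangulated

section DerivedCategory

variable {C : Type*} [Category C] [Abelian C] [HasDerivedCategory C]

open DerivedCategory

instance (Q : ObjectProperty (DerivedCategory C)) [Q.IsTriangulatedClosed₂]
    [Q.IsClosedUnderIsomorphisms] :
    (Q.inverseImage (singleFunctor C 0)).IsClosedUnderExtensions where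
  prop_X₂_of_shortExact hS h₁ h₃ :=
    Q.ext_of_isTriangulatedClosed₂ _ hS.singleTriangle_distinguished h₁ h₃

lemma extNonzero_iff_nontrivial {X Y : C} {d : ℤ} :
    extNonzero C X Y d ↔
      Nontrivial ((singleFunctor C 0).obj X ⟶ ((singleFunctor C 0).obj Y)⟦d⟧) :=
  (nontrivial_iff_exists_ne 0).symm

lemma extNonzero_iff_not_leftOrthogonal {X Y : C} {d : ℤ} :
    extNonzero C X Y d ↔
      ¬ (ObjectProperty.singleton (((singleFunctor C 0).obj Y)⟦d⟧)).leftOrthogonal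
        ((singleFunctor C 0).obj X) := by
  simp [extNonzero, ObjectProperty.leftOrthogonal]

lemma extNonzero_iff_not_rightOrthogonal_shift {X Y : C} {d : ℤ} :
    extNonzero C X Y d ↔
      ¬ ((ObjectProperty.singleton ((singleFunctor C 0).obj X)).rightOrthogonal.shift d)
        ((singleFunctor C 0).obj Y) := by
  simp [extNonzero, ObjectProperty.rightOrthogonal, ObjectProperty.shift]

theorem FiniteLength.exists_simple_not_prop_singleFunctor (hfl : FiniteLength C)
    (Q : ObjectProperty (DerivedCategory C)) [Q.IsClosedUnderIsomorphisms] [Q.ContainsZero]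
    [Q.IsTriangulatedClosed₂] {X : C} (hX : ¬ Q ((singleFunctor C 0).obj X)) :
    ∃ S : C, Simple S ∧ ¬ Q ((singleFunctor C 0).obj S) := by
  by_contra! h
  exact hX (hfl.prop_of_simple (Q.inverseImage (singleFunctor C 0)) h X)

theorem FiniteLength.exists_simple_extNonzero_left (hfl : FiniteLength C) {X Y : C} {d : ℤ}
    (h : extNonzero C X Y d) : ∃ S : C, Simple S ∧ extNonzero C S Y d := by
  simp only [extNonzero_iff_not_leftOrthogonal] at h ⊢
  exact hfl.exists_simple_not_prop_singleFunctor _ h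

theorem FiniteLength.exists_simple_extNonzero_right (hfl : FiniteLength C) {X Y : C} {d : ℤ}
    (h : extNonzero C X Y d) : ∃ S : C, Simple S ∧ extNonzero C X S d := by
  simp only [extNonzero_iff_not_rightOrthogonal_shift] at h ⊢
  exact hfl.exists_simple_not_prop_singleFunctor _ h

theorem FiniteLength.projDim_le_of_simple (hfl : FiniteLength C) {Q : C} {N : ℤ}
    (h : ∀ (k : ℕ) (S : C), Simple S → extNonzero C Q S k → (k : ℤ) ≤ N) :
    projDim C Q ≤ N.toNat :=
  iSup₂_le fun k ⟨_, hk⟩ => by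
    obtain ⟨S, hS, hkS⟩ := hfl.exists_simple_extNonzero_right hk
    have := h k S hS hkS
    exact Nat.cast_le.2 (by omega)

theorem FiniteLength.injDim_le_of_simple (hfl : FiniteLength C) {Q : C} {N : ℤ}
    (h : ∀ (k : ℕ) (S : C), Simple S → extNonzero C S Q k → (k : ℤ) ≤ N) :
    injDim C Q ≤ N.toNat :=
  iSup₂_le fun k ⟨_, hk⟩ => by
    obtain ⟨S, hS, hkS⟩ := hfl.exists_simple_extNonzero_left hk
    have := h k S hS hkS
    exact Nat.cast_le.2 (by omega)

theorem FiniteLength.gldim_le_of_simple (hfl : FiniteLength C) {N : ℤ}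
    (h : ∀ (k : ℕ) (S S' : C), Simple S → Simple S' →
      extNonzero C S S' k → (k : ℤ) ≤ N) :
    gldim C ≤ N.toNat :=
  iSup_le fun _ => hfl.projDim_le_of_simple fun k S hS hk => by
    obtain ⟨S', hS', hk'⟩ := hfl.exists_simple_extNonzero_left hk
    exact h k S' S hS' hS hk'

end DerivedCategory

section Hereditary

open DerivedCategory

variable {C : Type*} [Category C] [Abelian C] [HasDerivedCategory C]
  {ℋ : Type*} [Category ℋ] [Abelian ℋ] [HasDerivedCategory ℋ]

lemma Hereditary.le_one_of_extNonzero (hH : Hereditary ℋ) {X Y : ℋ} {d : ℤ}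
    (h : extNonzero ℋ X Y d) : d ≤ 1 := by
  by_contra! hd
  exact hH X Y d.toNat (by omega) (by rwa [Int.toNat_of_nonneg (by omega)])

lemma Hereditary.le_sub_add_one_of_extNonzero (hH : Hereditary ℋ)
    (F : DerivedCategory C ⥤ DerivedCategory ℋ) [F.Faithful] [F.CommShift ℤ]
    {X Y : C} {A B : ℋ} {a b k : ℤ}
    (eX : F.obj ((singleFunctor C 0).obj X) ≅ ((singleFunctor ℋ 0).obj A)⟦a⟧)
    (eY : F.obj ((singleFunctor C 0).obj Y) ≅ ((singleFunctor ℋ 0).obj B)⟦b⟧)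
    (h : extNonzero C X Y k) : k ≤ a - b + 1 := by
  rw [extNonzero_iff_nontrivial] at h
  have : Nontrivial
      (((singleFunctor ℋ 0).obj A)⟦a⟧ ⟶ ((singleFunctor ℋ 0).obj B)⟦b + k⟧) :=
    @Equiv.nontrivial _ _ (Iso.homCongr eX ((F.commShiftIso k).app _ ≪≫
      (shiftFunctor _ k).mapIso eY ≪≫ ((shiftFunctorAdd' _ b k (b + k) rfl).app _).symm)).symm
      F.map_injective.nontrivial
  have := hH.le_one_of_extNonzero (X := A) (Y := B)
    (extNonzero_iff_nontrivial.2 (nontrivial_hom_shift_sub (a := a) (b := b + k)))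
  omega

end Hereditary

theorem projDim_injDim_bounds_of_n_bounds
    (hfl : FiniteLength 𝒜)
    (hH : Hereditary ℋ)
    (F : DerivedCategory 𝒜 ⥤ DerivedCategory ℋ)
    [F.IsEquivalence] [F.CommShift ℤ]
    (f : 𝒜 → ℋ) (n : 𝒜 → ℤ)
    (hfn : ∀ P : 𝒜, Indecomposable P → Indecomposable (f P) ∧
      Nonempty (F.obj ((DerivedCategory.singleFunctor 𝒜 0).obj P) ≅
        (((DerivedCategory.singleFunctor ℋ 0).obj (f P))⟦n P⟧)))
    (n₀ d : ℤ)
    (hbound : ∀ P : 𝒜, Indecomposable P → n₀ ≤ n P ∧ n P < n₀ + d) :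
    (∀ Q : 𝒜, Indecomposable Q →
        projDim 𝒜 Q ≤ ((n Q - n₀ + 1).toNat : ℕ∞) ∧
        injDim 𝒜 Q ≤ ((n₀ + d - n Q).toNat : ℕ∞)) ∧
      gldim 𝒜 ≤ (d.toNat : ℕ∞) := by
  have ext_le : ∀ X Y : 𝒜, Indecomposable X → Indecomposable Y → ∀ k : ℤ,
      extNonzero 𝒜 X Y k → k ≤ n X - n Y + 1 := fun X Y hX hY _ =>
    hH.le_sub_add_one_of_extNonzero F (hfn X hX).2.some (hfn Y hY).2.some
  have hind (S : 𝒜) (_ : Simple S) : Indecomposable S := indecomposable_of_simple S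
  refine ⟨fun Q hQ => ⟨hfl.projDim_le_of_simple fun k S hS hk => ?_,
      hfl.injDim_le_of_simple fun k S hS hk => ?_⟩,
    hfl.gldim_le_of_simple fun k S S' hS hS' hk => ?_⟩
  · have := ext_le Q S hQ (hind S hS) k hk
    have := hbound S (hind S hS)
    omega
  · have := ext_le S Q (hind S hS) hQ k hk
    have := hbound S (hind S hS)
    omega
  · have := ext_le S S' (hind S hS) (hind S' hS') k hk
    have := hbound S (hind S hS)
    have := hbound S' (hind S' hS')
    omega

end PiecewiseHereditaryPaper
end
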